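/- Let G be a group, K, H ≤ G subgroups, and let I ⊆ G be a set of representatives for the double cosets K\G/H. Then there is an isomorphism of left ℤ[G]-modules ℤ[G/K] ⊗_ℤ ℤ[G/H] ≅ ⊕_{g ∈ I} ℤ[G/(K ∩ gHg⁻¹)], where G acts diagonally on the tensor product. -/

import Mathlib

/-!
The diagonal action of `G` on `G ⧸ K × G ⧸ H` has the pairs `(K, gH)`, `g ∈ I`, as orbit
representatives, since `(aK, bH)` lies in the orbit of `(K, gH)` exactly when `a⁻¹b ∈ KgH`; the
stabilizer of `(K, gH)` is `K ∩ gHg⁻¹`. So `G ⧸ K × G ⧸ H ≃ Σ g ∈ I, G ⧸ (K ∩ gHg⁻¹)` as `G`-sets,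
and linearizing this bijection, using `ℤ[X] ⊗ ℤ[Y] ≅ ℤ[X × Y]` and `ℤ[Σ i, Y i] ≅ ⨁ i, ℤ[Y i]`,
gives the isomorphism of modules.
-/

open scoped TensorProduct DirectSum

/-- Left translation action of `a : G` on the permutation module `ℤ[G/L]`. -/
noncomputable def permAct {G : Type} [Group G] (L : Subgroup G) (a : G) :
    ((G ⧸ L) →₀ ℤ) →ₗ[ℤ] ((G ⧸ L) →₀ ℤ) :=
  Finsupp.lmapDomain ℤ ℤ (fun x : G ⧸ L => a • x)

/-- The conjugate subgroup `gHg⁻¹`. -/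
def conjSub {G : Type} [Group G] (g : G) (H : Subgroup G) : Subgroup G :=
  Subgroup.map (MulAut.conj g).toMonoidHom H

section Linearization
variable {R : Type*} [CommSemiring R]

theorem finsuppTensorFinsupp'_map_lmapDomain {X X' Y Y' : Type*} (f : X → X') (g : Y → Y')
    (t : (X →₀ R) ⊗[R] (Y →₀ R)) :
    finsuppTensorFinsupp' R X' Y' (TensorProduct.map (Finsupp.lmapDomain R R f)
        (Finsupp.lmapDomain R R g) t) =
      Finsupp.mapDomain (Prod.map f g) (finsuppTensorFinsupp' R X Y t) := by
  suffices (finsuppTensorFinsupp' R X' Y').toLinearMap ∘ₗ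
      TensorProduct.map (Finsupp.lmapDomain R R f) (Finsupp.lmapDomain R R g) =
      Finsupp.lmapDomain R R (Prod.map f g) ∘ₗ (finsuppTensorFinsupp' R X Y).toLinearMap from
    LinearMap.congr_fun this t
  ext x y
  simp [Finsupp.mapDomain_single]

theorem Finsupp.domLCongr_mapDomain {M X Y : Type*} [AddCommMonoid M] [Module R M]
    (e : X ≃ Y) (f : X → X) (v : X →₀ M) :
    Finsupp.domLCongr (R := R) e (Finsupp.mapDomain f v) =
      Finsupp.mapDomain (e ∘ f ∘ e.symm) (Finsupp.domLCongr (R := R) e v) := by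
  simp only [Finsupp.domLCongr_apply, Finsupp.domCongr_apply, Finsupp.equivMapDomain_eq_mapDomain,
    ← Finsupp.mapDomain_comp, Function.comp_def, Equiv.symm_apply_apply]

theorem sigmaFinsuppLequivDFinsupp_mapDomain {ι M : Type*} {Y Y' : ι → Type*} [AddCommMonoid M]
    [Module R M] (f : ∀ i, Y i → Y' i) (v : (Σ i, Y i) →₀ M) :
    sigmaFinsuppLequivDFinsupp R (Finsupp.mapDomain (Sigma.map id f) v) =
      DFinsupp.mapRange.linearMap (fun i => Finsupp.lmapDomain M R (f i))
        (sigmaFinsuppLequivDFinsupp R v) := by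
  classical
  induction v using Finsupp.induction_linear with
  | zero => simp only [Finsupp.mapDomain_zero, map_zero]
  | add v w hv hw => simp only [Finsupp.mapDomain_add, map_add, hv, hw]
  | single p m =>
    obtain ⟨i, y⟩ := p
    simp [Finsupp.mapDomain_single, sigmaFinsuppEquivDFinsupp_single, Sigma.map]

theorem exists_linearEquiv_tensor_finsupp_sigma {X X' ι : Type*} {Y : ι → Type*}
    (φ : (Σ i, Y i) ≃ X × X') :
    ∃ e : ((X →₀ R) ⊗[R] (X' →₀ R)) ≃ₗ[R] Π₀ i, (Y i →₀ R),
      ∀ (f : X → X) (f' : X' → X') (g : ∀ i, Y i → Y i),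
        (∀ i y, φ ⟨i, g i y⟩ = Prod.map f f' (φ ⟨i, y⟩)) → ∀ t,
          e (TensorProduct.map (Finsupp.lmapDomain R R f) (Finsupp.lmapDomain R R f') t) =
            DFinsupp.mapRange.linearMap (fun i => Finsupp.lmapDomain R R (g i)) (e t) := by
  refine ⟨finsuppTensorFinsupp' R X X' ≪≫ₗ Finsupp.domLCongr φ.symm ≪≫ₗ
    sigmaFinsuppLequivDFinsupp R, fun f f' g hφ t => ?_⟩
  have hφ' : φ.symm ∘ Prod.map f f' ∘ φ = Sigma.map id g := by
    funext ⟨i, y⟩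
    rw [Function.comp_apply, Function.comp_apply, Equiv.symm_apply_eq]
    exact (hφ i y).symm
  simp only [LinearEquiv.trans_apply, finsuppTensorFinsupp'_map_lmapDomain,
    Finsupp.domLCongr_mapDomain, Equiv.symm_symm, hφ', sigmaFinsuppLequivDFinsupp_mapDomain]

end Linearization

namespace MulAction
variable {G X ι : Type*} [Group G] [MulAction G X]

theorem stabilizer_prod {Y : Type*} [MulAction G Y] (x : X) (y : Y) :
    stabilizer G (x, y) = stabilizer G x ⊓ stabilizer G y := by
  ext a
  simp [Prod.ext_iff]

theorem bijective_sigma_ofQuotientStabilizer {x : ι → X} (hx : ∀ y, ∃! i, y ∈ orbit G (x i)) :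
    Function.Bijective fun p : Σ i, G ⧸ stabilizer G (x i) =>
      ofQuotientStabilizer G (x p.1) p.2 := by
  constructor
  · rintro ⟨i, p⟩ ⟨j, q⟩ hpq
    obtain rfl : i = j := by
      induction p using QuotientGroup.induction_on with | H a =>
      induction q using QuotientGroup.induction_on with | H b =>
      have hab : a • x i = b • x j := hpq
      have hij : x i ∈ orbit G (x j) :=
        ⟨a⁻¹ * b, show (a⁻¹ * b) • x j = x i by rw [mul_smul, ← hab, inv_smul_smul]⟩
      exact (hx (x i)).unique (mem_orbit_self _) hij
    exact congrArg _ (injective_ofQuotientStabilizer G (x i) hpq)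
  · intro y
    obtain ⟨i, ⟨a, ha⟩, -⟩ := hx y
    exact ⟨⟨i, a⟩, ha⟩

noncomputable def sigmaQuotientEquivOfOrbitReps {x : ι → X} {L : ι → Subgroup G}
    (hL : ∀ i, L i = stabilizer G (x i)) (hx : ∀ y, ∃! i, y ∈ orbit G (x i)) :
    (Σ i, G ⧸ L i) ≃ X :=
  (Equiv.sigmaCongrRight fun i => Subgroup.quotientEquivOfEq (hL i)).trans
    (Equiv.ofBijective _ (bijective_sigma_ofQuotientStabilizer hx))

theorem sigmaQuotientEquivOfOrbitReps_smul {x : ι → X} {L : ι → Subgroup G}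
    (hL : ∀ i, L i = stabilizer G (x i)) (hx : ∀ y, ∃! i, y ∈ orbit G (x i))
    (i : ι) (a : G) (q : G ⧸ L i) :
    sigmaQuotientEquivOfOrbitReps hL hx ⟨i, a • q⟩ =
      a • sigmaQuotientEquivOfOrbitReps hL hx ⟨i, q⟩ := by
  induction q using QuotientGroup.induction_on with | H b =>
  exact mul_smul a b (x i)

end MulAction

section DoubleCoset
open MulAction
variable {G : Type} [Group G] (K H : Subgroup G)

theorem stabilizer_mk_one_mk (g : G) :
    stabilizer G (((1 : G) : G ⧸ K), (g : G ⧸ H)) = K ⊓ conjSub g H := by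
  have hg : (g : G ⧸ H) = g • ((1 : G) : G ⧸ H) := by simp
  rw [stabilizer_prod, hg, stabilizer_smul_eq_stabilizer_map_conj, stabilizer_quotient,
    stabilizer_quotient, conjSub]

theorem mk_mk_mem_orbit_iff (a b g : G) :
    ((a : G ⧸ K), (b : G ⧸ H)) ∈ orbit G (((1 : G) : G ⧸ K), (g : G ⧸ H)) ↔
      a⁻¹ * b ∈ DoubleCoset.doubleCoset g (K : Set G) H := by
  simp only [mem_orbit_iff, Prod.smul_mk, MulAction.Quotient.smul_mk, smul_eq_mul, mul_one,
    Prod.ext_iff, QuotientGroup.eq, DoubleCoset.mem_doubleCoset, SetLike.mem_coe]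
  constructor
  · rintro ⟨c, hc, hcg⟩
    exact ⟨(c⁻¹ * a)⁻¹, K.inv_mem hc, (c * g)⁻¹ * b, hcg, by group⟩
  · rintro ⟨k, hk, h, hh, hkgh⟩
    refine ⟨a * k, by simpa using K.inv_mem hk, ?_⟩
    convert hh using 1
    calc (a * k * g)⁻¹ * b = g⁻¹ * k⁻¹ * (a⁻¹ * b) := by group
      _ = h := by rw [hkgh]; group

theorem existsUnique_mem_orbit_mk_one_mk {I : Set G}
    (hI : ∀ x : G, ∃! g : I, x ∈ DoubleCoset.doubleCoset (g : G) (K : Set G) (H : Set G))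
    (y : (G ⧸ K) × (G ⧸ H)) :
    ∃! g : I, y ∈ orbit G (((1 : G) : G ⧸ K), ((g : G) : G ⧸ H)) := by
  obtain ⟨p, q⟩ := y
  induction p using QuotientGroup.induction_on with | H a =>
  induction q using QuotientGroup.induction_on with | H b =>
  simpa only [mk_mk_mem_orbit_iff] using hI (a⁻¹ * b)

theorem exists_sigma_quotient_inf_conjSub_equiv_prod {I : Set G}
    (hI : ∀ x : G, ∃! g : I, x ∈ DoubleCoset.doubleCoset (g : G) (K : Set G) (H : Set G)) :
    ∃ φ : (Σ g : I, G ⧸ (K ⊓ conjSub (g : G) H)) ≃ (G ⧸ K) × (G ⧸ H),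
      ∀ g (a : G) q, φ ⟨g, a • q⟩ = a • φ ⟨g, q⟩ :=
  ⟨_, sigmaQuotientEquivOfOrbitReps_smul (fun g : I => (stabilizer_mk_one_mk K H g).symm)
    (existsUnique_mem_orbit_mk_one_mk K H hI)⟩

end DoubleCoset

/-- Double coset formula: if `I` is a set of representatives for the double cosets
`K\G/H`, then `ℤ[G/K] ⊗ ℤ[G/H] ≅ ⊕_{g ∈ I} ℤ[G/(K ∩ gHg⁻¹)]` as `ℤ[G]`-modules,
where `G` acts diagonally on the tensor product. -/
theorem stmt_4 {G : Type} [Group G] (K H : Subgroup G) (I : Set G)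
    (hI : ∀ x : G, ∃! g : I, x ∈ DoubleCoset.doubleCoset (g : G) (K : Set G) (H : Set G)) :
    ∃ e : (((G ⧸ K) →₀ ℤ) ⊗[ℤ] ((G ⧸ H) →₀ ℤ)) ≃ₗ[ℤ]
        ⨁ g : I, ((G ⧸ (K ⊓ conjSub (g : G) H)) →₀ ℤ),
      ∀ (a : G) (t : ((G ⧸ K) →₀ ℤ) ⊗[ℤ] ((G ⧸ H) →₀ ℤ)),
        e (TensorProduct.map (permAct K a) (permAct H a) t) =
          DFinsupp.mapRange.linearMap
            (fun g : I => permAct (K ⊓ conjSub (g : G) H) a) (e t) := by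
  obtain ⟨φ, hφ⟩ := exists_sigma_quotient_inf_conjSub_equiv_prod K H hI
  obtain ⟨e, he⟩ := exists_linearEquiv_tensor_finsupp_sigma (R := ℤ) φ
  exact ⟨e, fun a => he _ _ _ fun g q => hφ g a q⟩
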